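/- arXiv:2310.00713 — 4 statements merged into one kernel-verified Lean document; each statement's English description precedes it below -/
import Mathlib

section
/- Let h : ℝ → ℝ be differentiable, let α : ℝ → ℝ be locally Lipschitz, strictly monotone increasing with α(0) = 0 (an extended class-K function), and let t₀ ∈ ℝ. If h(t₀) ≥ 0 and the derivative satisfies h'(t) ≥ α(h(t)) for all t ≥ t₀, then h(t) ≥ 0 for all t ≥ t₀. (Paper's Lemma 1, forward invariance of the 0-superlevel set, stated along a trajectory; local Lipschitz continuity of α is added to make the comparison argument valid.) -/
/-- Paper's Lemma 1 (forward invariance of the 0-superlevel set, along a trajectory):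
if `h` is differentiable, `α` is a locally Lipschitz extended class-K function,
`h t₀ ≥ 0` and `h' t ≥ α (h t)` for all `t ≥ t₀`, then `h t ≥ 0` for all `t ≥ t₀`. -/
theorem barrier_forward_invariance
    (h : ℝ → ℝ) (α : ℝ → ℝ) (t₀ : ℝ)
    (hdiff : Differentiable ℝ h)
    (hα_lip : LocallyLipschitz α)
    (hα_mono : StrictMono α)
    (hα_zero : α 0 = 0)
    (h_init : h t₀ ≥ 0)
    (h_ineq : ∀ t ≥ t₀, deriv h t ≥ α (h t)) :
    ∀ t ≥ t₀, h t ≥ 0 := by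
  intro t₁ ht₁
  by_contra hneg
  push_neg at hneg
  have hcont : Continuous h := hdiff.continuous
  -- the set of times in [t₀, t₁] where h is nonnegative
  set S : Set ℝ := Set.Icc t₀ t₁ ∩ h ⁻¹' Set.Ici 0 with hS
  have hSne : S.Nonempty := ⟨t₀, ⟨le_refl _, ht₁⟩, h_init⟩
  have hScomp : IsCompact S :=
    (isCompact_Icc.inter_right (isClosed_Ici.preimage hcont))
  set s := sSup S with hs_def
  have hsS : s ∈ S := hScomp.sSup_mem hSne
  obtain ⟨⟨hst₀, hst₁⟩, hhs⟩ := hsS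
  replace hhs : (0 : ℝ) ≤ h s := hhs
  have hs_lt : s < t₁ := lt_of_le_of_ne hst₁
    (fun heq => (not_le.mpr hneg) (heq ▸ hhs))
  have hub : ∀ t ∈ S, t ≤ s := fun t ht => le_csSup hScomp.bddAbove ht
  -- h is negative strictly after s (within (s, t₁])
  have hneg_after : ∀ t, s < t → t ≤ t₁ → h t < 0 := by
    intro t hst ht
    by_contra hge
    push_neg at hge
    exact absurd (hub t ⟨⟨le_trans hst₀ hst.le, ht⟩, hge⟩) (not_le.mpr hst)
  -- h s = 0
  have hhs0 : h s = 0 := by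
    rcases eq_or_lt_of_le hhs with h0 | hpos
    · exact h0.symm
    · exfalso
      have hmem : h ⁻¹' Set.Ioi 0 ∈ nhds s :=
        hcont.continuousAt.preimage_mem_nhds (Ioi_mem_nhds hpos)
      obtain ⟨δ, hδ, hball⟩ := Metric.mem_nhds_iff.mp hmem
      set t := min (s + δ / 2) t₁ with ht_def
      have hst : s < t := lt_min (by linarith) hs_lt
      have htt₁ : t ≤ t₁ := min_le_right _ _
      have htb : t ∈ Metric.ball s δ := by
        rw [Metric.mem_ball, Real.dist_eq, abs_of_pos (by linarith)]
        have : t ≤ s + δ / 2 := min_le_left _ _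
        linarith
      exact absurd (hball htb) (not_lt.mpr (hneg_after t hst htt₁).le)
  -- Lipschitz constant near 0
  obtain ⟨K, U, hU, hKU⟩ := hα_lip 0
  obtain ⟨ε, hε, hballU⟩ := Metric.mem_nhds_iff.mp hU
  -- choose t₂ ∈ (s, t₁] with |h t| < ε on [s, t₂]
  have hmem : h ⁻¹' Metric.ball 0 ε ∈ nhds s := by
    apply hcont.continuousAt.preimage_mem_nhds
    rw [hhs0]
    exact Metric.ball_mem_nhds _ hε
  obtain ⟨δ, hδ, hball⟩ := Metric.mem_nhds_iff.mp hmem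
  set t₂ := min (s + δ / 2) t₁ with ht₂_def
  have hst₂ : s < t₂ := lt_min (by linarith) hs_lt
  have ht₂t₁ : t₂ ≤ t₁ := min_le_right _ _
  have hsmall : ∀ t ∈ Set.Icc s t₂, h t ∈ Metric.ball (0 : ℝ) ε := by
    intro t ⟨h1, h2⟩
    apply hball
    rw [Metric.mem_ball, Real.dist_eq]
    have : t ≤ s + δ / 2 := le_trans h2 (min_le_left _ _)
    rw [abs_of_nonneg (by linarith)]
    linarith
  -- the auxiliary function g t = h t * exp (-K * t)
  set g : ℝ → ℝ := fun t => h t * Real.exp (-(K : ℝ) * t) with hg_def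
  have hEd : ∀ t : ℝ, HasDerivAt (fun t => Real.exp (-(K : ℝ) * t))
      (-(K : ℝ) * Real.exp (-(K : ℝ) * t)) t := by
    intro t
    have h1 : HasDerivAt (fun t : ℝ => -(K : ℝ) * t) (-(K : ℝ)) t := by
      simpa using (hasDerivAt_id t).const_mul (-(K : ℝ))
    simpa [mul_comm] using h1.exp
  have hgd : ∀ t : ℝ, HasDerivAt g
      ((deriv h t - (K : ℝ) * h t) * Real.exp (-(K : ℝ) * t)) t := by
    intro t
    have : HasDerivAt g (deriv h t * Real.exp (-(K : ℝ) * t) + h t * (-(K : ℝ) * Real.exp (-(K : ℝ) * t))) t :=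
      (hdiff t).hasDerivAt.mul (hEd t)
    convert this using 1
    ring
  have hgderiv : ∀ t : ℝ, deriv g t =
      (deriv h t - (K : ℝ) * h t) * Real.exp (-(K : ℝ) * t) :=
    fun t => (hgd t).deriv
  -- g is monotone on [s, t₂]
  have hmono : MonotoneOn g (Set.Icc s t₂) := by
    apply monotoneOn_of_deriv_nonneg (convex_Icc s t₂)
      (Continuous.continuousOn (by fun_prop))
      (fun t _ => ((hgd t).differentiableAt).differentiableWithinAt)
    intro t ht
    rw [interior_Icc] at ht
    obtain ⟨h1, h2⟩ := ht
    rw [hgderiv]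
    apply mul_nonneg _ (Real.exp_pos _).le
    have htneg : h t < 0 := hneg_after t h1 (le_trans h2.le ht₂t₁)
    have hin : h t ∈ U := hballU (hsmall t ⟨h1.le, h2.le⟩)
    have h0in : (0 : ℝ) ∈ U := hballU (by simpa using hε)
    have hlip := hKU.dist_le_mul (h t) hin 0 h0in
    rw [hα_zero, Real.dist_eq, Real.dist_eq, sub_zero, sub_zero,
      abs_of_neg htneg] at hlip
    have : α (h t) ≥ (K : ℝ) * h t := by
      rcases abs_cases (α (h t)) with ⟨he, _⟩ | ⟨he, _⟩ <;> nlinarith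
    have := h_ineq t (le_trans hst₀ h1.le)
    linarith
  -- conclude: 0 = g s ≤ g t₂, so h t₂ ≥ 0, contradiction
  have := hmono (Set.left_mem_Icc.mpr hst₂.le) (Set.right_mem_Icc.mpr hst₂.le) hst₂.le
  rw [hg_def] at this
  simp only [hhs0, zero_mul] at this
  have hpos := (Real.exp_pos (-(K : ℝ) * t₂))
  have ht₂neg : h t₂ < 0 := hneg_after t₂ hst₂ ht₂t₁
  nlinarith
end

section
/- Let p, pᵢ : ℝ → EuclideanSpace ℝ (Fin 2) be differentiable curves (vehicle and obstacle positions), set rᵢ(t) = pᵢ(t) − p(t), dᵢ(t) = ‖rᵢ(t)‖, v_r(t) = p'(t) − pᵢ'(t), and fix d_min > 0 and τ ∈ ℝ. Assume dᵢ(τ) ≥ d_min, and assume that for every t ≥ τ with v_r(t) ≠ 0 one has arccos(⟪v_r(t), rᵢ(t)⟫ / (‖v_r(t)‖ · dᵢ(t))) ≥ arcsin(d_min / dᵢ(t)). Then dᵢ(t) ≥ d_min for all t ≥ τ, i.e., the vehicle never collides with the obstacle. (Paper's Lemma 2: keeping the relative velocity outside the collision cone guarantees collision avoidance.) -/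
open scoped RealInnerProductSpace

/-- Sublevel invariance: if `g τ ≥ c` and `deriv g ≥ 0` whenever `g < c` (for `t ≥ τ`),
then `g t ≥ c` for all `t ≥ τ`. -/
lemma stays_above {g : ℝ → ℝ} {c τ : ℝ} (hg : Differentiable ℝ g)
    (h0 : c ≤ g τ) (hd : ∀ t ≥ τ, g t < c → 0 ≤ deriv g t) :
    ∀ t ≥ τ, c ≤ g t := by
  intro t₀ ht₀
  by_contra hcon
  push_neg at hcon
  set S : Set ℝ := {t | t ∈ Set.Icc τ t₀ ∧ c ≤ g t} with hS
  have hne : τ ∈ S := ⟨⟨le_refl _, ht₀⟩, h0⟩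
  have hScomp : IsCompact S := by
    have h1 : S = Set.Icc τ t₀ ∩ g ⁻¹' Set.Ici c := rfl
    rw [h1]
    exact (isCompact_Icc).inter_right (isClosed_Ici.preimage hg.continuous)
  have hsmem : sSup S ∈ S := hScomp.sSup_mem ⟨τ, hne⟩
  set s := sSup S with hs
  have hst : s ≤ t₀ := hsmem.1.2
  have hτs : τ ≤ s := hsmem.1.1
  have hgs : c ≤ g s := hsmem.2
  have hslt : s < t₀ :=
    lt_of_le_of_ne hst (fun heq => absurd (heq ▸ hgs) (not_le.mpr hcon))
  have hlt : ∀ t, s < t → t ≤ t₀ → g t < c := by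
    intro t hst' htt₀
    by_contra h
    push_neg at h
    have hmem : t ∈ S := ⟨⟨le_trans hτs hst'.le, htt₀⟩, h⟩
    exact absurd (le_csSup ⟨t₀, fun x hx => hx.1.2⟩ hmem) (not_le.mpr hst')
  have hmono : MonotoneOn g (Set.Icc s t₀) := by
    apply monotoneOn_of_deriv_nonneg (convex_Icc s t₀) hg.continuous.continuousOn
      (fun x hx => (hg x).differentiableWithinAt)
    intro x hx
    rw [interior_Icc] at hx
    exact hd x (le_trans hτs hx.1.le) (hlt x hx.1 hx.2.le)
  have hfin : g s ≤ g t₀ :=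
    hmono (Set.left_mem_Icc.mpr hst) (Set.right_mem_Icc.mpr hst) hst
  exact absurd (le_trans hgs hfin) (not_le.mpr hcon)

/-- Paper's Lemma 2: keeping the relative velocity outside the collision cone
(`λᵢ ≥ βᵢ` whenever the relative velocity is nonzero) guarantees collision avoidance
(`dᵢ(t) ≥ d_min` for all `t ≥ τ`). -/
theorem collision_cone_avoidance
    (p pᵢ : ℝ → EuclideanSpace ℝ (Fin 2))
    (hp : Differentiable ℝ p) (hpi : Differentiable ℝ pᵢ)
    (d_min τ : ℝ) (hd_min : 0 < d_min)
    (h_init : ‖pᵢ τ - p τ‖ ≥ d_min)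
    (h_cone : ∀ t ≥ τ, deriv p t - deriv pᵢ t ≠ 0 →
      Real.arccos (⟪deriv p t - deriv pᵢ t, pᵢ t - p t⟫ /
          (‖deriv p t - deriv pᵢ t‖ * ‖pᵢ t - p t‖)) ≥
        Real.arcsin (d_min / ‖pᵢ t - p t‖)) :
    ∀ t ≥ τ, ‖pᵢ t - p t‖ ≥ d_min := by
  set r : ℝ → EuclideanSpace ℝ (Fin 2) := fun t => pᵢ t - p t with hr
  have hrd : Differentiable ℝ r := hpi.sub hp
  set g : ℝ → ℝ := fun t => ⟪r t, r t⟫ with hg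
  have hgd : Differentiable ℝ g := hrd.inner ℝ hrd
  have hgderiv : ∀ t, deriv g t = 2 * ⟪deriv r t, r t⟫ := by
    intro t
    rw [hg]
    rw [deriv_inner_apply ℝ (hrd t) (hrd t)]
    rw [real_inner_comm (r t) (deriv r t)]
    ring
  have hrderiv : ∀ t, deriv r t = deriv pᵢ t - deriv p t := by
    intro t
    exact deriv_sub (hpi t) (hp t)
  have key : ∀ t ≥ τ, d_min ^ 2 ≤ g t := by
    apply stays_above hgd
    · calc d_min ^ 2 ≤ ‖r τ‖ ^ 2 := by
            apply pow_le_pow_left₀ hd_min.le h_init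
          _ = g τ := (real_inner_self_eq_norm_sq (r τ)).symm
    · intro t ht hglt
      have hnorm_lt : ‖r t‖ < d_min := by
        by_contra h
        push_neg at h
        have : d_min ^ 2 ≤ ‖r t‖ ^ 2 := pow_le_pow_left₀ hd_min.le h 2
        rw [← real_inner_self_eq_norm_sq] at this
        exact absurd hglt (not_lt.mpr this)
      rw [hgderiv t, hrderiv t]
      -- suffices: ⟪deriv pᵢ t - deriv p t, r t⟫ ≥ 0, i.e. ⟪v_r, r t⟫ ≤ 0
      have hkey : ⟪deriv p t - deriv pᵢ t, r t⟫ ≤ 0 := by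
        by_cases hv : deriv p t - deriv pᵢ t = 0
        · simp [hv]
        · have hcone := h_cone t ht hv
          by_cases hrz : r t = 0
          · simp [hrz]
          · have hrpos : 0 < ‖r t‖ := norm_pos_iff.mpr hrz
            have hvpos : 0 < ‖deriv p t - deriv pᵢ t‖ := norm_pos_iff.mpr hv
            have harc : Real.arcsin (d_min / ‖r t‖) = Real.pi / 2 := by
              apply Real.arcsin_eq_pi_div_two.mpr
              rw [le_div_iff₀ hrpos]
              linarith
            rw [harc] at hcone
            -- arccos x ≥ π/2 → x ≤ 0
            have hx : ⟪deriv p t - deriv pᵢ t, r t⟫ /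
                (‖deriv p t - deriv pᵢ t‖ * ‖r t‖) ≤ 0 := by
              by_contra hxx
              push_neg at hxx
              have := Real.arccos_lt_pi_div_two.mpr hxx
              exact absurd hcone (not_le.mpr this)
            have hden : 0 < ‖deriv p t - deriv pᵢ t‖ * ‖r t‖ := mul_pos hvpos hrpos
            have h3 := mul_le_mul_of_nonneg_right hx hden.le
            rwa [div_mul_cancel₀ _ hden.ne', zero_mul] at h3
      rw [show deriv pᵢ t - deriv p t = -(deriv p t - deriv pᵢ t) from (neg_sub _ _).symm,
        inner_neg_left]
      linarith
  intro t ht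
  have h1 := key t ht
  have h2 : g t = ‖r t‖ ^ 2 := real_inner_self_eq_norm_sq (r t)
  rw [h2] at h1
  show d_min ≤ ‖r t‖
  nlinarith [norm_nonneg (r t)]
end

section
/- Let p, q : ℝ → EuclideanSpace ℝ (Fin 2) be differentiable at t ∈ ℝ, set r = q(t) − p(t), d = ‖r‖, w = p'(t) − q'(t), and let d_min satisfy 0 < d_min ≤ d. If w ≠ 0 and arccos(⟪w, r⟫ / (‖w‖ · d)) ≥ arcsin(d_min / d), then the derivative at t of the separation distance s ↦ ‖q(s) − p(s)‖ is at least −(‖w‖ / d) · √(d² − d_min²). (Inequality (16) in the proof of the paper's Lemma 2.) -/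
open scoped RealInnerProductSpace
open Real InnerProductGeometry

/-!
The separation `d = ‖r‖` has derivative `⟪r, r'⟫ / d = -⟪w, r⟫ / d`. The cone hypothesis says
exactly that the angle `θ` between `w` and `r` is at least `arcsin (d_min / d)`, so, `cos` being
decreasing on `[0, π]`, `⟪w, r⟫ = ‖w‖ d cos θ ≤ ‖w‖ d cos (arcsin (d_min / d)) = ‖w‖ √(d² - d_min²)`.
-/

theorem Real.mul_cos_arcsin_div {d : ℝ} (hd : 0 ≤ d) (m : ℝ) :
    d * cos (arcsin (m / d)) = √(d ^ 2 - m ^ 2) := by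
  rcases hd.eq_or_lt with rfl | hd
  · rw [zero_mul, eq_comm, sqrt_eq_zero']
    nlinarith [sq_nonneg m]
  rw [cos_arcsin, ← sqrt_sq hd.le, ← sqrt_mul (sq_nonneg d), sqrt_sq hd.le]
  congr 1
  field_simp

section InnerProductSpace

variable {F : Type*} [NormedAddCommGroup F] [InnerProductSpace ℝ F]

theorem HasDerivAt.norm {f : ℝ → F} {f' : F} {x : ℝ} (hf : HasDerivAt f f' x) (h0 : f x ≠ 0) :
    HasDerivAt (‖f ·‖) (⟪f x, f'⟫ / ‖f x‖) x := by
  have hsq : ‖f x‖ ^ 2 ≠ 0 := pow_ne_zero 2 (norm_ne_zero_iff.2 h0)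
  convert hf.norm_sq.sqrt hsq using 1
  · simp only [sqrt_sq (norm_nonneg _)]
  · rw [sqrt_sq (norm_nonneg _)]
    field_simp

/-- At a zero of `f` both sides vanish: `‖f ·‖` has a local minimum there, and `0 / 0 = 0`. -/
theorem deriv_norm_eq_inner_div_norm {f : ℝ → F} {x : ℝ} (hf : DifferentiableAt ℝ f x) :
    deriv (‖f ·‖) x = ⟪f x, deriv f x⟫ / ‖f x‖ := by
  by_cases h0 : f x = 0
  · rw [h0, norm_zero, div_zero]
    by_cases hd : DifferentiableAt ℝ (‖f ·‖) x
    · refine IsLocalMin.deriv_eq_zero (Filter.Eventually.of_forall fun y => ?_)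
      simp [h0]
    · exact deriv_zero_of_not_differentiableAt hd
  · exact (hf.hasDerivAt.norm h0).deriv

theorem inner_le_norm_mul_sqrt_of_arcsin_le_angle {w r : F} {m : ℝ} (hm : 0 ≤ m)
    (h : arcsin (m / ‖r‖) ≤ angle w r) : ⟪w, r⟫ ≤ ‖w‖ * √(‖r‖ ^ 2 - m ^ 2) :=
  calc ⟪w, r⟫ = ‖w‖ * (‖r‖ * cos (angle w r)) := by
        rw [← cos_angle_mul_norm_mul_norm]; ring
    _ ≤ ‖w‖ * (‖r‖ * cos (arcsin (m / ‖r‖))) := by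
        gcongr
        exact cos_le_cos_of_nonneg_of_le_pi (arcsin_nonneg.2 (by positivity)) (angle_le_pi w r) h
    _ = ‖w‖ * √(‖r‖ ^ 2 - m ^ 2) := by rw [mul_cos_arcsin_div (norm_nonneg r)]

end InnerProductSpace

theorem separation_rate_bound_general
    (p q : ℝ → EuclideanSpace ℝ (Fin 2)) (t : ℝ)
    (hp : DifferentiableAt ℝ p t) (hq : DifferentiableAt ℝ q t)
    (d_min : ℝ) (hd_min : 0 < d_min)
    (h_cone : Real.arccos (⟪deriv p t - deriv q t, q t - p t⟫ /
        (‖deriv p t - deriv q t‖ * ‖q t - p t‖)) ≥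
      Real.arcsin (d_min / ‖q t - p t‖)) :
    deriv (fun s => ‖q s - p s‖) t ≥
      -(‖deriv p t - deriv q t‖ / ‖q t - p t‖) *
        Real.sqrt (‖q t - p t‖ ^ 2 - d_min ^ 2) := by
  have h_inner := inner_le_norm_mul_sqrt_of_arcsin_le_angle hd_min.le h_cone
  rw [deriv_norm_eq_inner_div_norm (f := fun s => q s - p s) (hq.sub hp), deriv_fun_sub hq hp,
    ← neg_sub (deriv p t), inner_neg_right, real_inner_comm, neg_div, neg_mul, ge_iff_le, neg_le_neg_iff,
    div_mul_eq_mul_div]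
  exact div_le_div_of_nonneg_right h_inner (norm_nonneg _)

/-- Inequality (16) in the proof of the paper's Lemma 2: if the relative velocity
lies outside the collision cone, then the separation distance decreases no faster
than `−(‖w‖/d)·√(d² − d_min²)`. -/
theorem separation_rate_bound
    (p q : ℝ → EuclideanSpace ℝ (Fin 2)) (t : ℝ)
    (hp : DifferentiableAt ℝ p t) (hq : DifferentiableAt ℝ q t)
    (d_min : ℝ) (hd_min : 0 < d_min) (hle : d_min ≤ ‖q t - p t‖)
    (hw : deriv p t - deriv q t ≠ 0)
    (h_cone : Real.arccos (⟪deriv p t - deriv q t, q t - p t⟫ /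
        (‖deriv p t - deriv q t‖ * ‖q t - p t‖)) ≥
      Real.arcsin (d_min / ‖q t - p t‖)) :
    deriv (fun s => ‖q s - p s‖) t ≥
      -(‖deriv p t - deriv q t‖ / ‖q t - p t‖) *
        Real.sqrt (‖q t - p t‖ ^ 2 - d_min ^ 2) :=
  separation_rate_bound_general p q t hp hq d_min hd_min h_cone
end

section
/- Let v, vᵢ, φ, a, b, κ, A, Aᵢ be real numbers with κ > 0, v ≥ |vᵢ · sin φ| + κ, |b| ≤ Aᵢ, and |a| ≤ A. Then |((v · b − vᵢ · a) · sin φ) / (v · √(v² − vᵢ² · sin² φ))| ≤ (Aᵢ + A) / κ. (The quantitative bound on the final term of the steering barrier-function derivative in the proof of the paper's Theorem 2, which yields the sufficient turning-rate condition r_max ≥ r_max,i + (a_max,i + a_max)/κ_min.) -/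
/-- The quantitative bound on the final term of the steering barrier-function
derivative in the proof of the paper's Theorem 2, yielding the sufficient
turning-rate condition `r_max ≥ r_max,i + (a_max,i + a_max)/κ_min`. -/
theorem steering_term_bound
    (v vᵢ φ a b κ A Aᵢ : ℝ) (hκ : 0 < κ)
    (hv : v ≥ |vᵢ * Real.sin φ| + κ)
    (hb : |b| ≤ Aᵢ) (ha : |a| ≤ A) :
    |((v * b - vᵢ * a) * Real.sin φ) /
        (v * Real.sqrt (v ^ 2 - vᵢ ^ 2 * Real.sin φ ^ 2))| ≤ (Aᵢ + A) / κ := by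
  set s := Real.sin φ with hs
  set w := |vᵢ * s| with hw
  have hw0 : 0 ≤ w := abs_nonneg _
  have hvpos : 0 < v := lt_of_lt_of_le (by linarith) hv
  have hs1 : |s| ≤ 1 := abs_le.mpr ⟨Real.neg_one_le_sin φ, Real.sin_le_one φ⟩
  have hA : 0 ≤ A := le_trans (abs_nonneg _) ha
  have hAi : 0 ≤ Aᵢ := le_trans (abs_nonneg _) hb
  have hw2 : vᵢ ^ 2 * s ^ 2 = w ^ 2 := by
    rw [hw, ← mul_pow, sq_abs]
  have hkey : κ ^ 2 ≤ v ^ 2 - vᵢ ^ 2 * s ^ 2 := by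
    rw [hw2]; nlinarith [hw0]
  have hsq : κ ≤ Real.sqrt (v ^ 2 - vᵢ ^ 2 * s ^ 2) := by
    have := Real.sqrt_le_sqrt hkey
    rwa [Real.sqrt_sq hκ.le] at this
  have hDpos : 0 < v * Real.sqrt (v ^ 2 - vᵢ ^ 2 * s ^ 2) :=
    mul_pos hvpos (lt_of_lt_of_le hκ hsq)
  have hnum : |(v * b - vᵢ * a) * s| ≤ v * (Aᵢ + A) := by
    have h1 : |(v * b - vᵢ * a) * s| ≤ |v * b * s| + |vᵢ * a * s| := by
      rw [sub_mul]; exact abs_sub _ _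
    have h2 : |v * b * s| = v * |b| * |s| := by
      rw [abs_mul, abs_mul, abs_of_pos hvpos]
    have h3 : |vᵢ * a * s| = w * |a| := by
      rw [hw, abs_mul, abs_mul, abs_mul]; ring
    have h4 : v * |b| * |s| ≤ v * Aᵢ := by
      have : v * |b| * |s| ≤ v * Aᵢ * 1 := by
        apply mul_le_mul (by nlinarith [abs_nonneg b]) hs1 (abs_nonneg s)
        nlinarith
      linarith
    have h5 : w * |a| ≤ v * A := by
      have : w * |a| ≤ v * |a| := by nlinarith [abs_nonneg a]
      nlinarith [abs_nonneg a]
    nlinarith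
  rw [abs_div, abs_of_pos hDpos, div_le_div_iff₀ hDpos hκ]
  have hD : v * κ ≤ v * Real.sqrt (v ^ 2 - vᵢ ^ 2 * s ^ 2) :=
    mul_le_mul_of_nonneg_left hsq hvpos.le
  nlinarith [hnum, hD, mul_le_mul_of_nonneg_left hD (by linarith : (0:ℝ) ≤ Aᵢ + A)]
end
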